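/- arXiv:2006.09517 — 8 statements merged into one kernel-verified Lean document; each statement's English description precedes it below -/
import Mathlib

section
/- Let {B_t} be a non-negative real sequence and p, q > 0 be reals such that B_{t+1} ≤ B_t − q·B_{t+1}^{p+1} for all t ≥ 1, and q(1+p)·B_1^p ≤ 1. Then for all t ≥ 1, B_t ≤ c·t^{−1/p}, where c = max{B_1, (2/(q p))^{1/p}}. -/
/-!
Set `v t = B t ^ p`. Since `B (t+1) (1 + q B (t+1) ^ p) ≤ B t`, raising to the power `p` and a
Bernoulli-type estimate `(1 + x) ^ p (1 - p x / 2) ≥ 1` (valid while `x (1 + p) ≤ 1`, which the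
initial condition and monotonicity guarantee) give `v (t+1) (1 + (p q / 2) v t) ≤ v t`, i.e.
`1 / v` grows by at least `p q / 2` per step. Comparing with `1 / c ^ p ≤ p q / 2` yields
`t v t ≤ c ^ p` by induction, and taking `p`-th roots gives the bound.
-/

open Real

theorem one_le_one_add_rpow_mul_of_le_one {p x : ℝ} (hp : 0 ≤ p) (hp1 : p ≤ 1) (hx : 0 ≤ x)
    (hx1 : x ≤ 1) : 1 ≤ (1 + x) ^ p * (1 - p * x / 2) := by
  have h1x : 0 < 1 + x := by linarith
  have hbernoulli : (1 + -(x / (1 + x))) ^ p ≤ 1 + p * -(x / (1 + x)) :=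
    rpow_one_add_le_one_add_mul_self (by rw [neg_le_neg_iff, div_le_one h1x]; linarith) hp hp1
  have hinv : 1 + -(x / (1 + x)) = (1 + x)⁻¹ := by field_simp; ring
  have hhalf : x / 2 ≤ x / (1 + x) := div_le_div_of_nonneg_left hx h1x (by linarith)
  rw [hinv, inv_rpow h1x.le, inv_le_iff_one_le_mul₀' (rpow_pos_of_pos h1x p)] at hbernoulli
  have hP := rpow_pos_of_pos h1x p
  nlinarith [mul_le_mul_of_nonneg_left hhalf hp]

theorem one_le_one_add_rpow_mul_of_one_le {p x : ℝ} (hp : 1 ≤ p) (hx : 0 ≤ x)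
    (hpx : p * x ≤ 1) : 1 ≤ (1 + x) ^ p * (1 - p * x / 2) := by
  have hbernoulli : 1 + p * x ≤ (1 + x) ^ p := one_add_mul_self_le_rpow_one_add (by linarith) hp
  calc (1 : ℝ) ≤ (1 + p * x) * (1 - p * x / 2) := by
        nlinarith [mul_nonneg (mul_nonneg (by linarith : (0 : ℝ) ≤ p) hx) (sub_nonneg.2 hpx)]
    _ ≤ (1 + x) ^ p * (1 - p * x / 2) := by gcongr; linarith

theorem one_le_one_add_rpow_mul {p x : ℝ} (hp : 0 < p) (hx : 0 ≤ x) (hpx : x * (1 + p) ≤ 1) :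
    1 ≤ (1 + x) ^ p * (1 - p * x / 2) := by
  rcases le_total p 1 with hp1 | hp1
  · exact one_le_one_add_rpow_mul_of_le_one hp.le hp1 hx (by nlinarith)
  · exact one_le_one_add_rpow_mul_of_one_le hp1 hx (by nlinarith)

theorem rpow_mul_one_add_le_rpow {p q a b : ℝ} (hp : 0 < p) (hq : 0 < q) (hb : 0 ≤ b)
    (hsmall : q * (1 + p) * b ^ p ≤ 1) (hab : b + q * b ^ (p + 1) ≤ a) :
    b ^ p * (1 + p * q / 2 * a ^ p) ≤ a ^ p := by
  rcases hb.eq_or_lt with rfl | hb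
  · rw [zero_rpow hp.ne', zero_mul]
    exact rpow_nonneg (by simpa [zero_rpow (by linarith : p + 1 ≠ 0)] using hab) p
  set x := q * b ^ p
  have hx : 0 ≤ x := by positivity
  have hbx : b * (1 + x) ≤ a := by
    rwa [rpow_add hb, rpow_one, ← mul_assoc, mul_comm _ b, ← mul_one_add] at hab
  have hpow : b ^ p * (1 + x) ^ p ≤ a ^ p := by
    rw [← mul_rpow hb.le (by positivity)]
    exact rpow_le_rpow (by positivity) hbx hp.le
  have hkey := one_le_one_add_rpow_mul hp hx (by simpa only [x, mul_right_comm] using hsmall)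
  have hhalf : 0 ≤ 1 - p * x / 2 := by
    nlinarith [rpow_nonneg (by linarith : (0 : ℝ) ≤ 1 + x) p]
  have hbp := rpow_pos_of_pos hb p
  calc b ^ p * (1 + p * q / 2 * a ^ p)
      ≤ b ^ p * ((1 + x) ^ p * (1 - p * x / 2)) + a ^ p * (p * x / 2) := by
        nlinarith [mul_le_mul_of_nonneg_left hkey hbp.le]
    _ ≤ a ^ p * (1 - p * x / 2) + a ^ p * (p * x / 2) := by
        rw [← mul_assoc]; gcongr
    _ = a ^ p := by ring

theorem natCast_mul_le_of_mul_one_add_le {v : ℕ → ℝ} {C δ : ℝ} (hv : ∀ t, 0 ≤ v t)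
    (h1 : v 1 ≤ C) (hCδ : 1 ≤ C * δ) (hstep : ∀ t ≥ 1, v (t + 1) * (1 + δ * v t) ≤ v t) :
    ∀ t : ℕ, 1 ≤ t → (t : ℝ) * v t ≤ C := by
  have hC : 0 < C := ((hv 1).trans h1).lt_of_ne (by rintro rfl; linarith)
  intro t ht
  induction t, ht using Nat.le_induction with
  | base => simpa using h1
  | succ n hn ih =>
    have hstep := hstep n hn
    have hpos : 0 < 1 + δ * v n := by nlinarith [hv n]
    -- `(n + 1) v (n+1) (1 + δ v n) ≤ n v n + v n ≤ C + C δ v n`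
    refine le_of_mul_le_mul_right ?_ hpos
    push_cast
    nlinarith [hv n, hv (n + 1), mul_le_mul_of_nonneg_left hstep (by positivity : (0 : ℝ) ≤ n + 1)]

theorem le_mul_rpow_neg_inv_of_mul_rpow_le {p b c t : ℝ} (hp : 0 < p) (hb : 0 ≤ b) (hc : 0 ≤ c)
    (ht : 0 < t) (h : t * b ^ p ≤ c ^ p) : b ≤ c * t ^ (-(1 / p)) := by
  have hroot : b * t ^ (1 / p) ≤ c := by
    rw [← rpow_le_rpow_iff (by positivity) hc hp, mul_rpow hb (by positivity),
      ← rpow_mul ht.le, one_div_mul_cancel hp.ne', rpow_one, mul_comm]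
    exact h
  rw [rpow_neg ht.le, ← div_eq_mul_inv, le_div_iff₀ (by positivity)]
  exact hroot

/-- Recursion lemma: a non-negative sequence satisfying
`B (t+1) ≤ B t - q * B (t+1) ^ (p+1)` with `q * (1+p) * B 1 ^ p ≤ 1`
decays like `t ^ (-1/p)` with constant `c = max (B 1) ((2/(q*p))^(1/p))`. -/
theorem stmt0 (B : ℕ → ℝ) (p q : ℝ) (hp : 0 < p) (hq : 0 < q)
    (hB : ∀ t, 0 ≤ B t)
    (hrec : ∀ t ≥ 1, B (t + 1) ≤ B t - q * B (t + 1) ^ (p + 1))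
    (hinit : q * (1 + p) * B 1 ^ p ≤ 1) :
    ∀ t ≥ 1, B t ≤ max (B 1) ((2 / (q * p)) ^ (1 / p)) * (t : ℝ) ^ (-(1 / p)) := by
  set c := max (B 1) ((2 / (q * p)) ^ (1 / p))
  have hc : 0 ≤ c := (hB 1).trans (le_max_left _ _)
  have hB_le : ∀ t ≥ 1, B t ≤ B 1 := by
    intro t ht
    induction t, ht using Nat.le_induction with
    | base => rfl
    | succ n hn ih =>
      have := mul_nonneg hq.le (rpow_nonneg (hB (n + 1)) (p + 1))
      linarith [hrec n hn]
  have hcp : 1 ≤ c ^ p * (p * q / 2) := by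
    have : 2 / (q * p) ≤ c ^ p := by
      rw [← rpow_inv_rpow (by positivity : (0 : ℝ) ≤ 2 / (q * p)) hp.ne', ← one_div]
      exact rpow_le_rpow (by positivity) (le_max_right _ _) hp.le
    rw [div_le_iff₀ (by positivity)] at this
    linarith
  have hstep : ∀ t ≥ 1, B (t + 1) ^ p * (1 + p * q / 2 * B t ^ p) ≤ B t ^ p := by
    intro t ht
    have hsmall : q * (1 + p) * B (t + 1) ^ p ≤ 1 :=
      hinit.trans' (by gcongr; exacts [hB _, hB_le _ (by omega)])
    exact rpow_mul_one_add_le_rpow hp hq (hB _) hsmall (by linarith [hrec t ht])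
  have hdecay := natCast_mul_le_of_mul_one_add_le (v := fun t ↦ B t ^ p)
    (fun t ↦ rpow_nonneg (hB t) p) (rpow_le_rpow (hB 1) (le_max_left _ _) hp.le) hcp hstep
  intro t ht
  exact le_mul_rpow_neg_inv_of_mul_rpow_le hp (hB t) hc (by positivity) (hdecay t ht)
end

section
/- Under the hypotheses of the recursion lemma (B_{t+1} ≤ B_t − q·B_{t+1}^{p+1}, q(1+p)B_1^p ≤ 1, B_t ≥ 0), the sequence also satisfies B_{t+1} ≤ B_t − (q/2)·B_t^{p+1} for all t ≥ 1. -/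
/-!
Monotonicity gives `B t ≤ B 1`, so `s := (q/2) B_t^p` satisfies `(1 + p) s ≤ 1/2` at every step.
With `x := B_t - (q/2) B_t^{p+1} = B_t (1 - s)`, Bernoulli's inequality gives
`(1 - s)^{p+1} ≥ 1 - (1 + p) s ≥ 1/2`, i.e. `q x^{p+1} ≥ (q/2) B_t^{p+1}`. Hence if `B_{t+1} > x`, the
recursion would give `B_{t+1} ≤ B_t - q B_{t+1}^{p+1} ≤ B_t - q x^{p+1} ≤ x`, a contradiction.
-/

namespace RpowRecursion

lemma half_le_one_sub_rpow {p s : ℝ} (hp : 0 ≤ p) (hs : (1 + p) * s ≤ 1 / 2) :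
    1 / 2 ≤ (1 - s) ^ (p + 1) := by
  have hs1 : -1 ≤ -s := by nlinarith
  have hbernoulli := one_add_mul_self_le_rpow_one_add hs1 (p := p + 1) (by linarith)
  rw [← sub_eq_add_neg] at hbernoulli
  linarith

lemma sub_half_mul_rpow_eq {b p q : ℝ} (hb : 0 ≤ b) (hp : 0 ≤ p) :
    b - q / 2 * b ^ (p + 1) = b * (1 - q / 2 * b ^ p) := by
  rw [Real.rpow_add_one' hb (by linarith)]; ring

lemma one_sub_half_mul_rpow_nonneg {b p q : ℝ} (hb : 0 ≤ b) (hp : 0 ≤ p) (hq : 0 ≤ q)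
    (hsmall : q * (1 + p) * b ^ p ≤ 1) :
    0 ≤ 1 - q / 2 * b ^ p := by
  have hqb : 0 ≤ q * b ^ p := mul_nonneg hq (Real.rpow_nonneg hb p)
  nlinarith [mul_nonneg hp hqb]

lemma half_mul_rpow_le_sub_rpow {b p q : ℝ} (hb : 0 ≤ b) (hp : 0 ≤ p) (hq : 0 ≤ q)
    (hsmall : q * (1 + p) * b ^ p ≤ 1) :
    b ^ (p + 1) / 2 ≤ (b - q / 2 * b ^ (p + 1)) ^ (p + 1) := by
  have hs : (1 + p) * (q / 2 * b ^ p) ≤ 1 / 2 := by linarith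
  rw [sub_half_mul_rpow_eq hb hp, Real.mul_rpow hb (one_sub_half_mul_rpow_nonneg hb hp hq hsmall)]
  nlinarith [half_le_one_sub_rpow hp hs, Real.rpow_nonneg hb (p + 1)]

lemma le_sub_half_mul_rpow_of_le_sub_mul_rpow {b b' p q : ℝ} (hb : 0 ≤ b) (hp : 0 ≤ p)
    (hq : 0 ≤ q) (hrec : b' ≤ b - q * b' ^ (p + 1)) (hsmall : q * (1 + p) * b ^ p ≤ 1) :
    b' ≤ b - q / 2 * b ^ (p + 1) := by
  by_contra! hx
  have hx_nonneg : 0 ≤ b - q / 2 * b ^ (p + 1) := by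
    rw [sub_half_mul_rpow_eq hb hp]
    exact mul_nonneg hb (one_sub_half_mul_rpow_nonneg hb hp hq hsmall)
  have hpow := Real.rpow_le_rpow hx_nonneg hx.le (by linarith : 0 ≤ p + 1)
  nlinarith [half_mul_rpow_le_sub_rpow hb hp hq hsmall]

end RpowRecursion

open RpowRecursion in
/-- Under the hypotheses of the recursion lemma, the sequence also satisfies
`B (t+1) ≤ B t - (q/2) * B t ^ (p+1)` for all `t ≥ 1`. -/
theorem stmt1 (B : ℕ → ℝ) (p q : ℝ) (hp : 0 < p) (hq : 0 < q)
    (hB : ∀ t, 0 ≤ B t)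
    (hrec : ∀ t ≥ 1, B (t + 1) ≤ B t - q * B (t + 1) ^ (p + 1))
    (hinit : q * (1 + p) * B 1 ^ p ≤ 1) :
    ∀ t ≥ 1, B (t + 1) ≤ B t - (q / 2) * B t ^ (p + 1) := by
  have hanti : AntitoneOn B {t | 1 ≤ t} := antitoneOn_nat_Ici_of_succ_le fun t ht ↦ by
    nlinarith [hrec t ht, Real.rpow_nonneg (hB (t + 1)) (p + 1)]
  intro t ht
  have hsmall : q * (1 + p) * B t ^ p ≤ 1 := by
    refine le_trans ?_ hinit
    gcongr
    · exact hB t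
    · exact hanti (le_refl 1) ht ht
  exact le_sub_half_mul_rpow_of_le_sub_mul_rpow (hB t) hp.le hq.le (hrec t ht) hsmall
end

section
/- Let ψ be a convex differentiable function on a convex set A with D_ψ(x, x') ≥ (1/2)‖x − x'‖_p² for some p ≥ 1. If u₁ = argmin_{w ∈ A}{⟨w, g₁⟩ + D_ψ(w, u)} and u₂ = argmin_{w ∈ A}{⟨w, g₂⟩ + D_ψ(w, u)}, then ‖u₁ − u₂‖_p ≤ ‖g₁ − g₂‖_q where 1/p + 1/q = 1. -/
/-- The `p`-norm on `Fin d → ℝ`. -/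
noncomputable def pnorm (p : ℝ) {d : ℕ} (x : Fin d → ℝ) : ℝ :=
  (∑ i, |x i| ^ p) ^ (1 / p)

/-- Dot product on `Fin d → ℝ`. -/
def dotp {d : ℕ} (x y : Fin d → ℝ) : ℝ := ∑ i, x i * y i

/-- Bregman divergence associated with `ψ` with gradient field `gψ`. -/
noncomputable def breg {d : ℕ} (ψ : (Fin d → ℝ) → ℝ)
    (gψ : (Fin d → ℝ) → (Fin d → ℝ)) (a b : Fin d → ℝ) : ℝ :=
  ψ a - ψ b - dotp (gψ b) (a - b)

/-!
Adding the two variational inequalities, tested at the other minimizer, gives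
`⟨∇ψ u₁ - ∇ψ u₂, u₁ - u₂⟩ ≤ ⟨g₂ - g₁, u₁ - u₂⟩`. The left side is the symmetrized Bregman
divergence `D_ψ(u₁, u₂) + D_ψ(u₂, u₁) ≥ ‖u₁ - u₂‖_p²`, and Hölder bounds the right side by
`‖u₁ - u₂‖_p ‖g₁ - g₂‖_q`; dividing by `‖u₁ - u₂‖_p` concludes.
-/

open Matrix

lemma dotp_eq_dotProduct {d : ℕ} (x y : Fin d → ℝ) : dotp x y = x ⬝ᵥ y := rfl

lemma pnorm_nonneg (p : ℝ) {d : ℕ} (x : Fin d → ℝ) : 0 ≤ pnorm p x := by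
  unfold pnorm
  positivity

lemma pnorm_sub_comm (p : ℝ) {d : ℕ} (x y : Fin d → ℝ) : pnorm p (x - y) = pnorm p (y - x) := by
  simp only [pnorm, Pi.sub_apply, abs_sub_comm]

lemma dotp_le_pnorm_mul_pnorm {p q : ℝ} (hpq : p.HolderConjugate q) {d : ℕ} (x y : Fin d → ℝ) :
    dotp x y ≤ pnorm p x * pnorm q y :=
  Real.inner_le_Lp_mul_Lq _ _ _ hpq

lemma breg_add_breg_swap {d : ℕ} (ψ : (Fin d → ℝ) → ℝ) (gψ : (Fin d → ℝ) → (Fin d → ℝ))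
    (a b : Fin d → ℝ) :
    breg ψ gψ a b + breg ψ gψ b a = dotp (gψ a - gψ b) (a - b) := by
  simp only [breg, dotp_eq_dotProduct, sub_dotProduct, dotProduct_sub]
  ring

lemma pnorm_sq_le_dotp_of_breg {d : ℕ} (p : ℝ) (ψ : (Fin d → ℝ) → ℝ)
    (gψ : (Fin d → ℝ) → (Fin d → ℝ)) {a b : Fin d → ℝ}
    (hab : (1 / 2) * pnorm p (a - b) ^ 2 ≤ breg ψ gψ a b)
    (hba : (1 / 2) * pnorm p (b - a) ^ 2 ≤ breg ψ gψ b a) :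
    pnorm p (a - b) ^ 2 ≤ dotp (gψ a - gψ b) (a - b) := by
  rw [pnorm_sub_comm p b a] at hba
  linarith [breg_add_breg_swap ψ gψ a b]

lemma dotp_sub_le_of_variational_ineq {d : ℕ} {G : (Fin d → ℝ) → (Fin d → ℝ)}
    {c g₁ g₂ u₁ u₂ : Fin d → ℝ}
    (h₁ : 0 ≤ dotp (g₁ + G u₁ - c) (u₂ - u₁)) (h₂ : 0 ≤ dotp (g₂ + G u₂ - c) (u₁ - u₂)) :
    dotp (G u₁ - G u₂) (u₁ - u₂) ≤ dotp (g₂ - g₁) (u₁ - u₂) := by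
  have hsum : dotp (g₁ + G u₁ - c) (u₂ - u₁) + dotp (g₂ + G u₂ - c) (u₁ - u₂)
      = dotp (g₂ - g₁) (u₁ - u₂) - dotp (G u₁ - G u₂) (u₁ - u₂) := by
    simp only [dotp_eq_dotProduct, sub_dotProduct, add_dotProduct, dotProduct_sub]
    ring
  linarith

lemma le_of_sq_le_mul {N M : ℝ} (hM : 0 ≤ M) (h : N ^ 2 ≤ N * M) : N ≤ M := by
  nlinarith

theorem stmt5_general (d : ℕ) (A : Set (Fin d → ℝ))
    (ψ : (Fin d → ℝ) → ℝ) (gψ : (Fin d → ℝ) → (Fin d → ℝ))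
    (p q : ℝ) (hp : 1 ≤ p) (hq : 1 ≤ q) (hpq : 1 / p + 1 / q = 1)
    (hsc : ∀ a ∈ A, ∀ b ∈ A, (1 / 2) * pnorm p (a - b) ^ 2 ≤ breg ψ gψ a b)
    (u u₁ u₂ : Fin d → ℝ) (g₁ g₂ : Fin d → ℝ)
    (hu₁ : u₁ ∈ A) (hu₂ : u₂ ∈ A)
    (hopt₁ : ∀ w ∈ A, 0 ≤ dotp (g₁ + gψ u₁ - gψ u) (w - u₁))
    (hopt₂ : ∀ w ∈ A, 0 ≤ dotp (g₂ + gψ u₂ - gψ u) (w - u₂)) :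
    pnorm p (u₁ - u₂) ≤ pnorm q (g₁ - g₂) := by
  have hconj : p.HolderConjugate q :=
    ⟨by simpa only [one_div, inv_one] using hpq, by linarith, by linarith⟩
  have hstrong := pnorm_sq_le_dotp_of_breg p ψ gψ (hsc u₁ hu₁ u₂ hu₂) (hsc u₂ hu₂ u₁ hu₁)
  have hmono := dotp_sub_le_of_variational_ineq (hopt₁ u₂ hu₂) (hopt₂ u₁ hu₁)
  have hholder := dotp_le_pnorm_mul_pnorm hconj (u₁ - u₂) (g₂ - g₁)
  rw [dotp_eq_dotProduct, dotProduct_comm, ← dotp_eq_dotProduct, pnorm_sub_comm q g₂] at hholder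
  exact le_of_sq_le_mul (pnorm_nonneg q _) (hstrong.trans (hmono.trans hholder))

/-- Non-expansiveness of the proximal/mirror step: if `D_ψ(·,·) ≥ (1/2)‖·‖_p²`
and `u₁, u₂` are the minimizers (characterized by first-order optimality) of
`w ↦ ⟨w, g₁⟩ + D_ψ(w,u)` and `w ↦ ⟨w, g₂⟩ + D_ψ(w,u)` over the convex set `A`,
then `‖u₁ - u₂‖_p ≤ ‖g₁ - g₂‖_q` where `1/p + 1/q = 1`. -/
theorem stmt5 (d : ℕ) (A : Set (Fin d → ℝ)) (hA : Convex ℝ A)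
    (ψ : (Fin d → ℝ) → ℝ) (gψ : (Fin d → ℝ) → (Fin d → ℝ))
    (hψ : ConvexOn ℝ A ψ)
    (p q : ℝ) (hp : 1 ≤ p) (hq : 1 ≤ q) (hpq : 1 / p + 1 / q = 1)
    (hsc : ∀ a ∈ A, ∀ b ∈ A, (1 / 2) * pnorm p (a - b) ^ 2 ≤ breg ψ gψ a b)
    (u u₁ u₂ : Fin d → ℝ) (g₁ g₂ : Fin d → ℝ)
    (hu : u ∈ A) (hu₁ : u₁ ∈ A) (hu₂ : u₂ ∈ A)
    (hopt₁ : ∀ w ∈ A, 0 ≤ dotp (g₁ + gψ u₁ - gψ u) (w - u₁))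
    (hopt₂ : ∀ w ∈ A, 0 ≤ dotp (g₂ + gψ u₂ - gψ u) (w - u₂)) :
    pnorm p (u₁ - u₂) ≤ pnorm q (g₁ - g₂) :=
  stmt5_general d A ψ gψ p q hp hq hpq hsc u u₁ u₂ g₁ g₂ hu₁ hu₂ hopt₁ hopt₂
end

section
/- If f(x,y) is γ-strongly convex in x and γ-strongly concave in y on X × Y, and z* = (x*, y*) is a saddle point, then for all z = (x,y) ∈ X × Y: F(z)ᵀ(z − z*) ≥ (γ/2)‖z − z*‖². Consequently, for z ∉ {z*}, sup_{z' ∈ X×Y} F(z)ᵀ(z − z')/‖z − z'‖ ≥ (γ/2)‖z − z*‖, i.e., the SP-MS condition holds with β = 0 and C = γ/2. -/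
open scoped InnerProductSpace

/-- If `f` is `γ`-strongly convex in `x` and `γ`-strongly concave in `y`
and `z* = (x*, y*)` is a saddle point, then
`F(z)ᵀ(z - z*) ≥ (γ/2)‖z - z*‖²`, and consequently (SP-MS with β = 0,
C = γ/2, witnessed by `z' = z*`):
`F(z)ᵀ(z - z*)/‖z - z*‖ ≥ (γ/2)‖z - z*‖` for `z ≠ z*`. -/
theorem stmt8 (m n : ℕ)
    (X : Set (EuclideanSpace ℝ (Fin m))) (Y : Set (EuclideanSpace ℝ (Fin n)))
    (hX : Convex ℝ X) (hY : Convex ℝ Y)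
    (f : EuclideanSpace ℝ (Fin m) → EuclideanSpace ℝ (Fin n) → ℝ)
    (gx : EuclideanSpace ℝ (Fin m) → EuclideanSpace ℝ (Fin n) → EuclideanSpace ℝ (Fin m))
    (gy : EuclideanSpace ℝ (Fin m) → EuclideanSpace ℝ (Fin n) → EuclideanSpace ℝ (Fin n))
    (γ : ℝ) (hγ : 0 < γ)
    (hsc : ∀ x ∈ X, ∀ x' ∈ X, ∀ y ∈ Y,
      f x y - f x' y ≤ ⟪gx x y, x - x'⟫_ℝ - (γ / 2) * ‖x - x'‖ ^ 2)
    (hscc : ∀ x ∈ X, ∀ y ∈ Y, ∀ y' ∈ Y,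
      f x y' - f x y ≤ ⟪gy x y, y' - y⟫_ℝ - (γ / 2) * ‖y' - y‖ ^ 2)
    (xs : EuclideanSpace ℝ (Fin m)) (ys : EuclideanSpace ℝ (Fin n))
    (hxs : xs ∈ X) (hys : ys ∈ Y)
    (hsaddle : ∀ x ∈ X, ∀ y ∈ Y, f xs y ≤ f xs ys ∧ f xs ys ≤ f x ys) :
    ∀ x ∈ X, ∀ y ∈ Y,
      (γ / 2) * (‖x - xs‖ ^ 2 + ‖y - ys‖ ^ 2) ≤
        ⟪gx x y, x - xs⟫_ℝ - ⟪gy x y, y - ys⟫_ℝ ∧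
      ((x, y) ≠ (xs, ys) →
        (γ / 2) * Real.sqrt (‖x - xs‖ ^ 2 + ‖y - ys‖ ^ 2) ≤
          (⟪gx x y, x - xs⟫_ℝ - ⟪gy x y, y - ys⟫_ℝ) /
            Real.sqrt (‖x - xs‖ ^ 2 + ‖y - ys‖ ^ 2)) := by

  intro x hx y hy
  have h1 := hsc x hx xs hxs y hy
  have h2 := hscc x hx y hy ys hys
  have hs := hsaddle x hx y hy
  have hinner : ⟪gy x y, ys - y⟫_ℝ = -⟪gy x y, y - ys⟫_ℝ := by
    rw [← inner_neg_right]; congr 1; abel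
  have hnorm : ‖ys - y‖ = ‖y - ys‖ := norm_sub_rev _ _
  have key : (γ / 2) * (‖x - xs‖ ^ 2 + ‖y - ys‖ ^ 2) ≤
      ⟪gx x y, x - xs⟫_ℝ - ⟪gy x y, y - ys⟫_ℝ := by
    rw [hinner, hnorm] at h2; linarith [hs.1, hs.2]
  refine ⟨key, fun hne => ?_⟩
  have hpos : 0 < ‖x - xs‖ ^ 2 + ‖y - ys‖ ^ 2 := by
    rcases eq_or_ne x xs with hxe | hxe
    · have hye : y ≠ ys := by
        intro h; exact hne (by rw [hxe, h])
      have : 0 < ‖y - ys‖ := by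
        rw [norm_pos_iff]; exact sub_ne_zero.mpr hye
      positivity
    · have : 0 < ‖x - xs‖ := by
        rw [norm_pos_iff]; exact sub_ne_zero.mpr hxe
      positivity
  have hsq : 0 < Real.sqrt (‖x - xs‖ ^ 2 + ‖y - ys‖ ^ 2) := Real.sqrt_pos.mpr hpos
  rw [le_div_iff₀ hsq]
  calc (γ / 2) * Real.sqrt (‖x - xs‖ ^ 2 + ‖y - ys‖ ^ 2) *
        Real.sqrt (‖x - xs‖ ^ 2 + ‖y - ys‖ ^ 2)
      = (γ / 2) * (‖x - xs‖ ^ 2 + ‖y - ys‖ ^ 2) := by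
        rw [mul_assoc, Real.mul_self_sqrt hpos.le]
    _ ≤ _ := key
end

section
/- Let X = Y = {(a,b) ∈ ℝ² : 0 ≤ a,b ≤ 1, a+b = 1}, n > 2 an integer, and f(x,y) = x₁^{2n} − x₁y₁ − y₁^{2n}. Then z* = ((0,1),(0,1)) is the unique Nash equilibrium, and for all z = (x,y) ∈ X × Y: F(z)ᵀ(z − z*)/‖z − z*‖ ≥ (n/2^{2n−2})·‖z − z*‖^{2n−1} whenever z ≠ z* (SP-MS with β = 2n−2 and C = n/2^{2n−2}). -/
/-- The segment `{(a,b) : 0 ≤ a, b ≤ 1, a + b = 1}` (as a subset of ℝ²). -/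
def Sseg : Set (ℝ × ℝ) := {p | 0 ≤ p.1 ∧ 0 ≤ p.2 ∧ p.1 + p.2 = 1}

/-- The game objective `f(x,y) = x₁^{2n} - x₁ y₁ - y₁^{2n}`. -/
def fgame (n : ℕ) (x y : ℝ × ℝ) : ℝ := x.1 ^ (2 * n) - x.1 * y.1 - y.1 ^ (2 * n)

/-- `(xs, ys)` is a Nash equilibrium (saddle point) of `fgame n` on `Sseg × Sseg`. -/
def isNEgame (n : ℕ) (xs ys : ℝ × ℝ) : Prop :=
  xs ∈ Sseg ∧ ys ∈ Sseg ∧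
    ∀ x ∈ Sseg, ∀ y ∈ Sseg, fgame n xs y ≤ fgame n xs ys ∧ fgame n xs ys ≤ fgame n x ys

/-- For `f(x,y) = x₁^{2n} - x₁y₁ - y₁^{2n}` on the simplex segment with `n > 2`:
`z* = ((0,1),(0,1))` is the unique Nash equilibrium, and SP-MS holds with
`β = 2n-2` and `C = n / 2^{2n-2}`:
`F(z)ᵀ(z - z*)/‖z - z*‖ ≥ (n/2^{2n-2}) ‖z - z*‖^{2n-1}` for `z ≠ z*`. -/
theorem stmt9 (n : ℕ) (hn : 2 < n) :
    (isNEgame n (0, 1) (0, 1) ∧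
      ∀ xs ys : ℝ × ℝ, isNEgame n xs ys → xs = (0, 1) ∧ ys = (0, 1)) ∧
    ∀ x ∈ Sseg, ∀ y ∈ Sseg, (x, y) ≠ (((0 : ℝ), (1 : ℝ)), ((0 : ℝ), (1 : ℝ))) →
      ((n : ℝ) / 2 ^ (2 * n - 2)) *
          Real.sqrt (x.1 ^ 2 + (x.2 - 1) ^ 2 + y.1 ^ 2 + (y.2 - 1) ^ 2) ^ (2 * n - 1) ≤
        ((2 * (n : ℝ) * x.1 ^ (2 * n - 1) - y.1) * x.1
            + (2 * (n : ℝ) * y.1 ^ (2 * n - 1) + x.1) * y.1) /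
          Real.sqrt (x.1 ^ 2 + (x.2 - 1) ^ 2 + y.1 ^ 2 + (y.2 - 1) ^ 2) := by
  obtain ⟨k, rfl⟩ : ∃ k, n = k + 3 := ⟨n - 3, by omega⟩
  have hmem : ((0 : ℝ), (1 : ℝ)) ∈ Sseg := ⟨le_refl 0, zero_le_one, by norm_num⟩
  constructor
  · constructor
    · refine ⟨hmem, hmem, ?_⟩
      intro x hx y hy
      simp only [fgame]
      constructor
      · simp only [zero_pow (by positivity : 2 * (k + 3) ≠ 0), zero_mul, zero_sub]
        have : (0:ℝ) ≤ y.1 ^ (2 * (k + 3)) := even_two_mul _ |>.pow_nonneg _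
        linarith
      · simp only [zero_pow (by positivity : 2 * (k + 3) ≠ 0), mul_zero, zero_mul]
        have : (0:ℝ) ≤ x.1 ^ (2 * (k + 3)) := even_two_mul _ |>.pow_nonneg _
        linarith
    · rintro xs ys ⟨⟨ha1, ha2, hasum⟩, ⟨hb1, hb2, hbsum⟩, h⟩
      obtain ⟨h1, h2⟩ := h (0, 1) hmem (0, 1) hmem
      simp only [fgame] at h1 h2
      simp only [zero_pow (by positivity : 2 * (k + 3) ≠ 0), zero_mul, mul_zero] at h1 h2
      -- h1 : xs.1^(2n) - xs.1*0 - 0 ≤ xs.1^(2n) - xs.1*ys.1 - ys.1^(2n)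
      -- h2 : xs.1^(2n) - xs.1*ys.1 - ys.1^(2n) ≤ 0 - 0 - ys.1^(2n)
      have hab : 0 ≤ xs.1 * ys.1 := mul_nonneg ha1 hb1
      have hbp : (0:ℝ) ≤ ys.1 ^ (2 * (k + 3)) := even_two_mul _ |>.pow_nonneg _
      have hap : (0:ℝ) ≤ xs.1 ^ (2 * (k + 3)) := even_two_mul _ |>.pow_nonneg _
      have hb0 : ys.1 = 0 := by
        have : ys.1 ^ (2 * (k + 3)) = 0 := by linarith
        exact pow_eq_zero_iff (by positivity) |>.mp this
      have ha0 : xs.1 = 0 := by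
        rw [hb0] at h2
        have : xs.1 ^ (2 * (k + 3)) = 0 := by linarith
        exact pow_eq_zero_iff (by positivity) |>.mp this
      exact ⟨Prod.ext ha0 (show xs.2 = 1 by linarith),
        Prod.ext hb0 (show ys.2 = 1 by linarith)⟩
  · rintro x ⟨hx1, hx2, hxs⟩ y ⟨hy1, hy2, hys⟩ hne
    have e1 : x.2 - 1 = -x.1 := by linarith
    have e2 : y.2 - 1 = -y.1 := by linarith
    rw [e1, e2, show x.1 ^ 2 + (-x.1) ^ 2 + y.1 ^ 2 + (-y.1) ^ 2
        = 2 * (x.1 ^ 2 + y.1 ^ 2) from by ring]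
    set a := x.1 with ha
    set b := y.1 with hb
    have htpos : 0 < a ^ 2 + b ^ 2 := by
      rcases (show 0 < a ∨ 0 < b by
        by_contra hc
        push_neg at hc
        have ha0 : a = 0 := le_antisymm hc.1 hx1
        have hb0 : b = 0 := le_antisymm hc.2 hy1
        have hx' : x = ((0:ℝ), (1:ℝ)) := Prod.ext ha0 (show x.2 = 1 by linarith)
        have hy' : y = ((0:ℝ), (1:ℝ)) := Prod.ext hb0 (show y.2 = 1 by linarith)
        exact hne (by rw [hx', hy'])) with hpos | hpos
      · nlinarith
      · nlinarith
    set s := Real.sqrt (2 * (a ^ 2 + b ^ 2)) with hsdef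
    have hs : 0 < s := Real.sqrt_pos.mpr (by linarith)
    have hs2 : s ^ 2 = 2 * (a ^ 2 + b ^ 2) := Real.sq_sqrt (by linarith)
    rw [le_div_iff₀ hs]
    rw [show 2 * (k + 3) - 1 = 2 * k + 5 from by omega,
        show 2 * (k + 3) - 2 = 2 * k + 4 from by omega]
    push_cast
    have hpow : s ^ (2 * k + 5) * s = (2 * (a ^ 2 + b ^ 2)) ^ (k + 3) := by
      rw [show s ^ (2 * k + 5) * s = (s ^ 2) ^ (k + 3) from by ring, hs2]
    have key : (a ^ 2 + b ^ 2) ^ (k + 3)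
        ≤ 2 ^ (k + 2) * (a ^ (2 * (k + 3)) + b ^ (2 * (k + 3))) := by
      have := add_pow_le (sq_nonneg a) (sq_nonneg b) (k + 3)
      simpa [← pow_mul] using this
    have hnn : (0:ℝ) ≤ (k : ℝ) + 3 := by positivity
    calc ((k : ℝ) + 3) / 2 ^ (2 * k + 4) * s ^ (2 * k + 5) * s
        = ((k : ℝ) + 3) * (2 ^ (k + 3) * (a ^ 2 + b ^ 2) ^ (k + 3)) / 2 ^ (2 * k + 4) := by
          rw [mul_assoc, hpow, mul_pow]; ring
      _ ≤ ((k : ℝ) + 3) * (2 ^ (k + 3) * (2 ^ (k + 2) * (a ^ (2 * (k + 3)) + b ^ (2 * (k + 3)))))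
            / 2 ^ (2 * k + 4) := by
          gcongr
      _ = (2 * ((k : ℝ) + 3) * a ^ (2 * k + 5) - b) * a
            + (2 * ((k : ℝ) + 3) * b ^ (2 * k + 5) + a) * b := by
          rw [show 2 * (k + 3) = 2 * k + 6 from by omega]
          field_simp
          ring
end

section
/- Let G ∈ ℝ^{M×N} be a zero-sum game matrix with value ρ (i.e., ρ = min_{x ∈ Δ_M} max_{y ∈ Δ_N} xᵀGy). Then there exists a Nash equilibrium (x*, y*) such that (Gy*)_i = ρ for all i ∈ supp(x*), (Gy*)_i > ρ for all i ∉ supp(x*), (Gᵀx*)_j = ρ for all j ∈ supp(y*), and (Gᵀx*)_j < ρ for all j ∉ supp(y*). -/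
/-- The probability simplex in `ℝ^d`. -/
def simplex (d : ℕ) : Set (Fin d → ℝ) := {v | (∀ i, 0 ≤ v i) ∧ ∑ i, v i = 1}

/-- The bilinear payoff `xᵀ G y`. -/
def payoff {M N : ℕ} (G : Matrix (Fin M) (Fin N) ℝ) (x : Fin M → ℝ) (y : Fin N → ℝ) : ℝ :=
  ∑ i, ∑ j, x i * G i j * y j

/-!
Von Neumann's minimax theorem (here Sion's) gives a saddle point `(a, b)`, and `ρ` is its
payoff. Subtracting `ρ` from every entry of `G` gives a game `A` of value `0`, whose
unnormalised optimal pairs are the `(x, y) ≥ 0` with `xᵀA ≤ 0 ≤ Ay`. These pairs are closed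
under addition, and each satisfies `xᵀAy = 0`, hence complementary slackness. For every row `i`
Farkas' lemma yields such a pair with `x i > 0` or `(Ay) i > 0`, and for every column `j` one
with `y j > 0` or `(xᵀA) j < 0`. Summing all of them (and `(a, b)`) gives one pair satisfying
all these strict inequalities at once; normalised, it is the required equilibrium.
-/

open Matrix

theorem PointedCone.mem_hull_image_of_forall_nonneg {𝕜 V ι : Type*} [Field 𝕜] [LinearOrder 𝕜]
    [IsStrictOrderedRing 𝕜] [AddCommGroup V] [Module 𝕜 V] (s : Finset ι)
    (a : ι → Module.Dual 𝕜 V) (b : Module.Dual 𝕜 V)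
    (h : ∀ x, (∀ i ∈ s, 0 ≤ a i x) → 0 ≤ b x) :
    b ∈ PointedCone.hull 𝕜 (a '' s) := by
  classical
  induction s using Finset.induction_on generalizing a b with
  | empty =>
    have hb : b = 0 := LinearMap.ext fun x =>
      le_antisymm (by simpa using h (-x) (by simp)) (h x (by simp))
    simp [hb]
  | insert j s _ ih =>
    by_cases hs : ∀ x, (∀ i ∈ s, 0 ≤ a i x) → 0 ≤ b x
    · exact Submodule.span_mono (Set.image_mono (by simp)) (ih a b hs)
    push Not at hs
    obtain ⟨x₀, hx₀, hbx₀⟩ := hs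
    have hajx₀ : a j x₀ < 0 := by
      by_contra! hj₀
      exact hbx₀.not_ge (h x₀ (by simpa using ⟨hj₀, hx₀⟩))
    -- Bartl's induction: compose all functionals with the projection onto `ker (a j)` along `x₀`.
    let π : V →ₗ[𝕜] V := LinearMap.id - ((a j x₀)⁻¹ • a j).smulRight x₀
    have hajπ : a j ∘ₗ π = 0 := by
      ext x
      simp [π, mul_right_comm _ (a j x), hajx₀.ne]
    have hπ (f : Module.Dual 𝕜 V) : f ∘ₗ π = f + (-(f x₀ / a j x₀)) • a j := by
      ext x
      simp [π, div_eq_mul_inv, mul_comm, mul_left_comm, sub_eq_add_neg]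
    have haj : a j ∈ PointedCone.hull 𝕜 (a '' ↑(insert j s)) :=
      Submodule.subset_span ⟨j, by simp, rfl⟩
    have hle : PointedCone.hull 𝕜 ((fun i => a i ∘ₗ π) '' s) ≤
        PointedCone.hull 𝕜 (a '' ↑(insert j s)) := by
      refine Submodule.span_le.2 (Set.image_subset_iff.2 fun i hi => ?_)
      have hc : 0 ≤ -(a i x₀ / a j x₀) :=
        neg_nonneg.2 (div_nonpos_of_nonneg_of_nonpos (hx₀ i hi) hajx₀.le)
      rw [Set.mem_preimage, hπ]
      exact add_mem (Submodule.subset_span ⟨i, by simp [hi], rfl⟩) (PointedCone.smul_mem _ hc haj)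
    have hbπ : b ∘ₗ π ∈ PointedCone.hull 𝕜 ((fun i => a i ∘ₗ π) '' s) :=
      ih _ _ fun x hx => h (π x) <| by
        simp only [Finset.mem_insert, forall_eq_or_imp]
        exact ⟨by simp [← LinearMap.comp_apply, hajπ], hx⟩
    have hb : b = b ∘ₗ π + (b x₀ / a j x₀) • a j := by
      rw [hπ]
      ext x
      simp
    rw [hb]
    exact add_mem (hle hbπ) (PointedCone.smul_mem _ (div_pos_of_neg_of_neg hbx₀ hajx₀).le haj)

theorem AddSubmonoid.exists_mem_forall_pos {ι E β : Type*} [Fintype ι] [AddCommMonoid E]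
    [AddCommMonoid β] [PartialOrder β] [IsOrderedAddMonoid β] (C : AddSubmonoid E)
    (F : E →+ ι → β) (hF : ∀ p ∈ C, 0 ≤ F p) (h : ∀ k, ∃ p ∈ C, 0 < F p k) :
    ∃ p ∈ C, ∀ k, 0 < F p k := by
  choose p hpC hpos using h
  refine ⟨∑ k, p k, C.sum_mem fun k _ => hpC k, fun k => ?_⟩
  rw [map_sum, Finset.sum_apply]
  exact (hpos k).trans_le (Finset.single_le_sum (fun l _ => hF _ (hpC l) k) (Finset.mem_univ k))

theorem inv_sum_smul_mem_stdSimplex {𝕜 ι : Type*} [Field 𝕜] [LinearOrder 𝕜]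
    [IsStrictOrderedRing 𝕜] [Fintype ι] {v : ι → 𝕜} (hv : 0 ≤ v) (h : 0 < ∑ i, v i) :
    (∑ i, v i)⁻¹ • v ∈ stdSimplex 𝕜 ι :=
  ⟨fun i => mul_nonneg (inv_nonneg.2 h.le) (hv i), by simp [← Finset.mul_sum, h.ne']⟩

theorem one_le_sum_add_of_mem_stdSimplex {𝕜 ι : Type*} [Semiring 𝕜] [PartialOrder 𝕜]
    [IsOrderedAddMonoid 𝕜] [Fintype ι] {u v : ι → 𝕜} (hu : 0 ≤ u) (hv : v ∈ stdSimplex 𝕜 ι) :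
    1 ≤ ∑ i, (u + v) i :=
  hv.2 ▸ Finset.sum_le_sum fun i _ => le_add_of_nonneg_left (hu i)

namespace Matrix

theorem vecMul_sub_const {R m n : Type*} [CommRing R] [Fintype m] {x : m → R}
    (hx : ∑ i, x i = 1) (G : Matrix m n R) (ρ : R) :
    x ᵥ* (G - of fun _ _ => ρ) = x ᵥ* G - fun _ => ρ := by
  ext j
  simp [vecMul, dotProduct, mul_sub, Finset.sum_sub_distrib, ← Finset.sum_mul, hx]

theorem sub_const_mulVec {R m n : Type*} [CommRing R] [Fintype n] {y : n → R}
    (hy : ∑ j, y j = 1) (G : Matrix m n R) (ρ : R) :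
    (G - of fun _ _ => ρ) *ᵥ y = G *ᵥ y - fun _ => ρ := by
  ext i
  simp [mulVec, dotProduct, sub_mul, Finset.sum_sub_distrib, ← Finset.mul_sum, hy]

variable {𝕜 m n : Type*} [Field 𝕜] [LinearOrder 𝕜] [IsStrictOrderedRing 𝕜] [Fintype m] [Fintype n]

theorem exists_nonneg_vecMul_le (A : Matrix m n 𝕜) (b : n → 𝕜)
    (h : ∀ y, 0 ≤ y → 0 ≤ A *ᵥ y → 0 ≤ b ⬝ᵥ y) : ∃ x, 0 ≤ x ∧ x ᵥ* A ≤ b := by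
  classical
  let a : n ⊕ m → Module.Dual 𝕜 (n → 𝕜) :=
    Sum.elim LinearMap.proj fun i => LinearMap.proj i ∘ₗ A.mulVecLin
  have hb := PointedCone.mem_hull_image_of_forall_nonneg Finset.univ a (dotProductEquiv 𝕜 n b)
    fun y hy => h y (fun j => hy (.inl j) (by simp)) (fun i => hy (.inr i) (by simp))
  rw [Finset.coe_univ, Set.image_univ, Submodule.mem_span_range_iff_exists_fun] at hb
  obtain ⟨c, hc⟩ := hb
  refine ⟨fun i => c (.inr i), fun i => (c _).2, fun j => ?_⟩
  have hbj : c (.inl j) + ∑ i, c (.inr i) * A i j = b j := by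
    simpa [a, Fintype.sum_sum_type, ← Nonneg.coe_smul, Pi.single_apply] using
      LinearMap.congr_fun hc (Pi.single j 1)
  rw [← hbj]
  exact le_add_of_nonneg_left (c _).2

/-- Unnormalised optimal strategy pairs of the game `A` when its value is `0`. -/
def optimalPairs (A : Matrix m n 𝕜) : AddSubmonoid ((m → 𝕜) × (n → 𝕜)) where
  carrier := {p | 0 ≤ p.1 ∧ p.1 ᵥ* A ≤ 0 ∧ 0 ≤ p.2 ∧ 0 ≤ A *ᵥ p.2}
  add_mem' := fun ⟨hx, hxA, hy, hAy⟩ ⟨hx', hxA', hy', hAy'⟩ =>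
    ⟨add_nonneg hx hx', by simpa [add_vecMul] using add_nonpos hxA hxA', add_nonneg hy hy',
      by simpa [mulVec_add] using add_nonneg hAy hAy'⟩
  zero_mem' := by simp

/-- A pair in `optimalPairs A` is strictly complementary exactly when all coordinates of its
`slack` are positive. -/
def slack (A : Matrix m n 𝕜) : (m → 𝕜) × (n → 𝕜) →+ m ⊕ n → 𝕜 where
  toFun p := Sum.elim (p.1 + A *ᵥ p.2) (p.2 - p.1 ᵥ* A)
  map_zero' := by ext (i | j) <;> simp
  map_add' p q := by
    ext (i | j) <;> simp [mulVec_add, add_vecMul, add_add_add_comm, add_sub_add_comm]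

variable {A : Matrix m n 𝕜} {p : (m → 𝕜) × (n → 𝕜)}

theorem slack_nonneg (hp : p ∈ A.optimalPairs) : 0 ≤ A.slack p := by
  obtain ⟨hx, hxA, hy, hAy⟩ := hp
  rintro (i | j)
  · exact add_nonneg (hx i) (hAy i)
  · exact sub_nonneg.2 ((hxA j).trans (hy j))

theorem mul_eq_zero_of_mem_optimalPairs (hp : p ∈ A.optimalPairs) :
    (∀ i, p.1 i * (A *ᵥ p.2) i = 0) ∧ ∀ j, (p.1 ᵥ* A) j * p.2 j = 0 := by
  obtain ⟨hx, hxA, hy, hAy⟩ := hp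
  have hle : p.1 ⬝ᵥ A *ᵥ p.2 ≤ 0 := by
    simpa [dotProduct_mulVec] using dotProduct_le_dotProduct_of_nonneg_right hxA hy
  have h₀ := le_antisymm hle (dotProduct_nonneg_of_nonneg hx hAy)
  refine ⟨fun i => ?_, fun j => ?_⟩
  · exact (Finset.sum_eq_zero_iff_of_nonneg fun i _ => mul_nonneg (hx i) (hAy i)).1 h₀ i
      (Finset.mem_univ i)
  · rw [dotProduct_mulVec] at h₀
    exact (Finset.sum_eq_zero_iff_of_nonpos fun j _ =>
      mul_nonpos_of_nonpos_of_nonneg (hxA j) (hy j)).1 h₀ j (Finset.mem_univ j)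

theorem pos_iff_of_forall_slack_pos (hp : p ∈ A.optimalPairs) (hpos : ∀ k, 0 < A.slack p k) :
    (∀ i, 0 < p.1 i ↔ (A *ᵥ p.2) i = 0) ∧ ∀ j, 0 < p.2 j ↔ (p.1 ᵥ* A) j = 0 := by
  obtain ⟨hrow, hcol⟩ := mul_eq_zero_of_mem_optimalPairs hp
  refine ⟨fun i => ⟨fun h => (mul_eq_zero.1 (hrow i)).resolve_left h.ne', fun h => ?_⟩,
    fun j => ⟨fun h => (mul_eq_zero.1 (hcol j)).resolve_right h.ne', fun h => ?_⟩⟩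
  · simpa [slack, h] using hpos (.inl i)
  · simpa [slack, h] using hpos (.inr j)

variable (A)

theorem exists_mem_optimalPairs_slack_inl_pos (i : m) :
    ∃ p ∈ A.optimalPairs, 0 < A.slack p (.inl i) := by
  classical
  by_cases hy : ∃ y, 0 ≤ y ∧ 0 ≤ A *ᵥ y ∧ 0 < (A *ᵥ y) i
  · obtain ⟨y, hy, hAy, hi⟩ := hy
    exact ⟨(0, y), ⟨le_rfl, by simp, hy, hAy⟩, by simpa [slack] using hi⟩
  push Not at hy
  obtain ⟨x, hx, hxA⟩ := A.exists_nonneg_vecMul_le (-A i) fun y hy' hAy => by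
    rw [neg_dotProduct, neg_nonneg]
    exact hy y hy' hAy
  refine ⟨(x + Pi.single i 1, 0), ⟨?_, ?_, le_rfl, by simp⟩, ?_⟩
  · exact add_nonneg hx (Pi.single_nonneg.2 zero_le_one)
  · rw [add_vecMul, single_one_vecMul]
    intro j
    have hj := hxA j
    simp only [Pi.add_apply, Pi.neg_apply, Pi.zero_apply, row_apply] at hj ⊢
    linarith
  · simpa [slack] using add_pos_of_nonneg_of_pos (hx i) zero_lt_one

theorem exists_mem_optimalPairs_slack_inr_pos (j : n) :
    ∃ p ∈ A.optimalPairs, 0 < A.slack p (.inr j) := by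
  obtain ⟨⟨y, x⟩, ⟨hy, hyA, hx, hAx⟩, hj⟩ := (-Aᵀ).exists_mem_optimalPairs_slack_inl_pos j
  refine ⟨(x, y), ⟨hx, ?_, hy, ?_⟩, ?_⟩
  · simpa [neg_mulVec, mulVec_transpose] using hAx
  · simpa [vecMul_neg, vecMul_transpose] using hyA
  · simpa [slack, neg_mulVec, mulVec_transpose, sub_eq_add_neg] using hj

theorem exists_mem_optimalPairs_forall_slack_pos :
    ∃ p ∈ A.optimalPairs, ∀ k, 0 < A.slack p k :=
  A.optimalPairs.exists_mem_forall_pos A.slack (fun _ => slack_nonneg) <| by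
    rintro (i | j)
    exacts [A.exists_mem_optimalPairs_slack_inl_pos i, A.exists_mem_optimalPairs_slack_inr_pos j]

theorem exists_strictlyComplementary_of_vecMul_nonpos_of_mulVec_nonneg
    (hx₀ : ∃ x ∈ stdSimplex 𝕜 m, x ᵥ* A ≤ 0) (hy₀ : ∃ y ∈ stdSimplex 𝕜 n, 0 ≤ A *ᵥ y) :
    ∃ x ∈ stdSimplex 𝕜 m, ∃ y ∈ stdSimplex 𝕜 n, x ᵥ* A ≤ 0 ∧ 0 ≤ A *ᵥ y ∧
      (∀ i, 0 < x i ↔ (A *ᵥ y) i = 0) ∧ ∀ j, 0 < y j ↔ (x ᵥ* A) j = 0 := by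
  obtain ⟨x₀, hx₀, hx₀A⟩ := hx₀
  obtain ⟨y₀, hy₀, hAy₀⟩ := hy₀
  have h₀ : (x₀, y₀) ∈ A.optimalPairs := ⟨hx₀.1, hx₀A, hy₀.1, hAy₀⟩
  obtain ⟨p, hp, hpos⟩ := A.exists_mem_optimalPairs_forall_slack_pos
  -- adding `(x₀, y₀)` keeps the slacks positive and makes both components nonzero
  set q := p + (x₀, y₀) with hq_def
  have hq : q ∈ A.optimalPairs := add_mem hp h₀
  have hqpos : ∀ k, 0 < A.slack q k := fun k => by
    rw [hq_def, map_add, Pi.add_apply]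
    exact add_pos_of_pos_of_nonneg (hpos k) (slack_nonneg h₀ k)
  obtain ⟨hrow, hcol⟩ := pos_iff_of_forall_slack_pos hq hqpos
  have hsx : 0 < ∑ i, q.1 i := one_pos.trans_le (one_le_sum_add_of_mem_stdSimplex hp.1 hx₀)
  have hsy : 0 < ∑ j, q.2 j := one_pos.trans_le (one_le_sum_add_of_mem_stdSimplex hp.2.2.1 hy₀)
  obtain ⟨hx, hxA, hy, hAy⟩ := hq
  refine ⟨_, inv_sum_smul_mem_stdSimplex hx hsx, _, inv_sum_smul_mem_stdSimplex hy hsy, ?_, ?_,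
    fun i => ?_, fun j => ?_⟩
  · rw [smul_vecMul]
    exact smul_nonpos_of_nonneg_of_nonpos (inv_nonneg.2 hsx.le) hxA
  · rw [mulVec_smul]
    exact smul_nonneg (inv_nonneg.2 hsy.le) hAy
  · simp [mulVec_smul, mul_pos_iff_of_pos_left (inv_pos.2 hsx), hsy.ne', hrow i]
  · simp [smul_vecMul, mul_pos_iff_of_pos_left (inv_pos.2 hsy), hsx.ne', hcol j]

theorem exists_strictlyComplementary_of_vecMul_le_of_le_mulVec (ρ : 𝕜)
    (hx₀ : ∃ x ∈ stdSimplex 𝕜 m, x ᵥ* A ≤ fun _ => ρ)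
    (hy₀ : ∃ y ∈ stdSimplex 𝕜 n, (fun _ => ρ) ≤ A *ᵥ y) :
    ∃ x ∈ stdSimplex 𝕜 m, ∃ y ∈ stdSimplex 𝕜 n, (x ᵥ* A ≤ fun _ => ρ) ∧
      (fun _ => ρ) ≤ A *ᵥ y ∧ (∀ i, 0 < x i ↔ (A *ᵥ y) i = ρ) ∧ ∀ j, 0 < y j ↔ (x ᵥ* A) j = ρ := by
  obtain ⟨x₀, hx₀, hx₀A⟩ := hx₀
  obtain ⟨y₀, hy₀, hAy₀⟩ := hy₀
  obtain ⟨x, hx, y, hy, hxA, hAy, hrow, hcol⟩ :=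
    (A - of fun _ _ => ρ).exists_strictlyComplementary_of_vecMul_nonpos_of_mulVec_nonneg
      ⟨x₀, hx₀, by rw [vecMul_sub_const hx₀.2]; exact sub_nonpos.2 hx₀A⟩
      ⟨y₀, hy₀, by rw [sub_const_mulVec hy₀.2]; exact sub_nonneg.2 hAy₀⟩
  rw [vecMul_sub_const hx.2] at hxA hcol
  rw [sub_const_mulVec hy.2] at hAy hrow
  exact ⟨x, hx, y, hy, sub_nonpos.1 hxA, sub_nonneg.1 hAy,
    fun i => by simpa [sub_eq_zero] using hrow i, fun j => by simpa [sub_eq_zero] using hcol j⟩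

variable {A}

theorem dotProduct_mulVec_le_of_vecMul_le {x : m → 𝕜} {y : n → 𝕜} {ρ : 𝕜}
    (hx : x ᵥ* A ≤ fun _ => ρ) (hy : y ∈ stdSimplex 𝕜 n) : x ⬝ᵥ A *ᵥ y ≤ ρ :=
  calc x ⬝ᵥ A *ᵥ y = x ᵥ* A ⬝ᵥ y := dotProduct_mulVec x A y
    _ ≤ (fun _ => ρ) ⬝ᵥ y := dotProduct_le_dotProduct_of_nonneg_right hx hy.1
    _ = ρ := by simp [dotProduct, ← Finset.mul_sum, hy.2]

theorem le_dotProduct_mulVec_of_le_mulVec {x : m → 𝕜} {y : n → 𝕜} {ρ : 𝕜}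
    (hy : (fun _ => ρ) ≤ A *ᵥ y) (hx : x ∈ stdSimplex 𝕜 m) : ρ ≤ x ⬝ᵥ A *ᵥ y :=
  calc ρ = x ⬝ᵥ fun _ => ρ := by simp [dotProduct, ← Finset.sum_mul, hx.2]
    _ ≤ x ⬝ᵥ A *ᵥ y := dotProduct_le_dotProduct_of_nonneg_left hy hx.1

theorem vecMul_le_of_isSaddlePointOn {a : m → 𝕜} {b : n → 𝕜}
    (h : IsSaddlePointOn (stdSimplex 𝕜 m) (stdSimplex 𝕜 n) (fun x y => x ⬝ᵥ A *ᵥ y) a b)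
    (ha : a ∈ stdSimplex 𝕜 m) : a ᵥ* A ≤ fun _ => a ⬝ᵥ A *ᵥ b := fun j => by
  classical
  have : a ⬝ᵥ A *ᵥ Pi.single j 1 ≤ a ⬝ᵥ A *ᵥ b := h a ha _ (single_mem_stdSimplex 𝕜 j)
  rwa [dotProduct_mulVec, dotProduct_single_one] at this

theorem le_mulVec_of_isSaddlePointOn {a : m → 𝕜} {b : n → 𝕜}
    (h : IsSaddlePointOn (stdSimplex 𝕜 m) (stdSimplex 𝕜 n) (fun x y => x ⬝ᵥ A *ᵥ y) a b)
    (hb : b ∈ stdSimplex 𝕜 n) : (fun _ => a ⬝ᵥ A *ᵥ b) ≤ A *ᵥ b := fun i => by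
  classical
  simpa using h _ (single_mem_stdSimplex 𝕜 i) b hb

end Matrix

theorem LinearMap.exists_isSaddlePointOn {E F : Type*} [NormedAddCommGroup E] [NormedSpace ℝ E]
    [FiniteDimensional ℝ E] [NormedAddCommGroup F] [NormedSpace ℝ F] [FiniteDimensional ℝ F]
    (B : E →ₗ[ℝ] F →ₗ[ℝ] ℝ) {X : Set E} {Y : Set F} (hX : X.Nonempty) (hXc : Convex ℝ X)
    (hXk : IsCompact X) (hY : Y.Nonempty) (hYc : Convex ℝ Y) (hYk : IsCompact Y) :
    ∃ a ∈ X, ∃ b ∈ Y, IsSaddlePointOn X Y (fun x y => B x y) a b :=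
  Sion.exists_isSaddlePointOn hX hXc hXk
    (fun y _ =>
      (B.flip y).continuous_of_finiteDimensional.lowerSemicontinuous.lowerSemicontinuousOn _)
    (fun y _ => ((B.flip y).convexOn hXc).quasiconvexOn) hYc hY hYk
    (fun x _ => (B x).continuous_of_finiteDimensional.upperSemicontinuous.upperSemicontinuousOn _)
    (fun x _ => ((B x).concaveOn hYc).quasiconcaveOn)

theorem Matrix.exists_isSaddlePointOn_dotProduct_mulVec {m n : Type*} [Fintype m] [Fintype n]
    [Nonempty m] [Nonempty n] (G : Matrix m n ℝ) :
    ∃ a ∈ stdSimplex ℝ m, ∃ b ∈ stdSimplex ℝ n,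
      IsSaddlePointOn (stdSimplex ℝ m) (stdSimplex ℝ n) (fun x y => x ⬝ᵥ G *ᵥ y) a b := by
  classical
  exact ((dotProductBilin ℝ ℝ).compl₂ G.mulVecLin).exists_isSaddlePointOn
    ⟨_, single_mem_stdSimplex ℝ (Classical.arbitrary m)⟩ (convex_stdSimplex ℝ m)
    (isCompact_stdSimplex ℝ m) ⟨_, single_mem_stdSimplex ℝ (Classical.arbitrary n)⟩
    (convex_stdSimplex ℝ n) (isCompact_stdSimplex ℝ n)

theorem IsSaddlePointOn.csInf_csSup_eq {E F β : Type*} [ConditionallyCompleteLattice β]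
    {X : Set E} {Y : Set F} {f : E → F → β} {a : E} {b : F} (h : IsSaddlePointOn X Y f a b)
    (ha : a ∈ X) (hb : b ∈ Y) (hbdd : ∀ x ∈ X, BddAbove (f x '' Y)) :
    sInf ((fun x => sSup (f x '' Y)) '' X) = f a b := by
  refine IsLeast.csInf_eq ⟨⟨a, ha, IsGreatest.csSup_eq ⟨⟨b, hb, rfl⟩, ?_⟩⟩, ?_⟩
  · rintro _ ⟨y, hy, rfl⟩
    exact h a ha y hy
  · rintro _ ⟨x, hx, rfl⟩
    exact (h x hx b hb).trans (le_csSup (hbdd x hx) ⟨b, hb, rfl⟩)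

theorem payoff_eq_dotProduct_mulVec {M N : ℕ} (G : Matrix (Fin M) (Fin N) ℝ) :
    payoff G = fun x y => x ⬝ᵥ G *ᵥ y := by
  ext x y
  simp [payoff, dotProduct, mulVec, Finset.mul_sum, mul_assoc]

/-- For a matrix game with value `ρ` there exists a Nash equilibrium `(x*, y*)`
with `(Gy*)_i = ρ` on `supp x*`, `(Gy*)_i > ρ` off `supp x*`,
`(Gᵀx*)_j = ρ` on `supp y*`, and `(Gᵀx*)_j < ρ` off `supp y*`. -/
theorem stmt12 (M N : ℕ) (hM : 0 < M) (hN : 0 < N)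
    (G : Matrix (Fin M) (Fin N) ℝ) (ρ : ℝ)
    (hρ : ρ = sInf ((fun x => sSup ((fun y => payoff G x y) '' simplex N)) '' simplex M)) :
    ∃ xs ∈ simplex M, ∃ ys ∈ simplex N,
      (∀ x ∈ simplex M, ∀ y ∈ simplex N,
        payoff G xs y ≤ payoff G xs ys ∧ payoff G xs ys ≤ payoff G x ys) ∧
      (∀ i, 0 < xs i → ∑ j, G i j * ys j = ρ) ∧
      (∀ i, xs i = 0 → ρ < ∑ j, G i j * ys j) ∧
      (∀ j, 0 < ys j → ∑ i, G i j * xs i = ρ) ∧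
      (∀ j, ys j = 0 → ∑ i, G i j * xs i < ρ) := by
  have := Fin.pos_iff_nonempty.1 hM
  have := Fin.pos_iff_nonempty.1 hN
  obtain ⟨a, ha, b, hb, hab⟩ := G.exists_isSaddlePointOn_dotProduct_mulVec
  have hval : ρ = a ⬝ᵥ G *ᵥ b := by
    rw [hρ, payoff_eq_dotProduct_mulVec]
    exact hab.csInf_csSup_eq ha hb fun x _ =>
      (isCompact_stdSimplex ℝ _).bddAbove_image (by fun_prop : Continuous _).continuousOn
  obtain ⟨xs, hxs, ys, hys, hxsG, hGys, hrow, hcol⟩ :=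
    G.exists_strictlyComplementary_of_vecMul_le_of_le_mulVec ρ
      ⟨a, ha, hval ▸ vecMul_le_of_isSaddlePointOn hab ha⟩
      ⟨b, hb, hval ▸ le_mulVec_of_isSaddlePointOn hab hb⟩
  have hsum (j : Fin N) : ∑ i, G i j * xs i = (xs ᵥ* G) j := by
    simp [vecMul, dotProduct, mul_comm]
  simp only [payoff_eq_dotProduct_mulVec]
  refine ⟨xs, hxs, ys, hys, fun x hx y hy => ⟨?_, ?_⟩, fun i => (hrow i).1, fun i hi => ?_,
    fun j hj => (hsum j).trans ((hcol j).1 hj), fun j hj => (hsum j).trans_lt ?_⟩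
  · exact (dotProduct_mulVec_le_of_vecMul_le hxsG hy).trans
      (le_dotProduct_mulVec_of_le_mulVec hGys hxs)
  · exact (dotProduct_mulVec_le_of_vecMul_le hxsG hys).trans
      (le_dotProduct_mulVec_of_le_mulVec hGys hx)
  · exact (hGys i).lt_of_ne fun h => hi.not_gt ((hrow i).2 h.symm)
  · exact (hxsG j).lt_of_ne fun h => hj.not_gt ((hcol j).2 h)
end

section
/- For a matrix game f(x,y) = xᵀGy on Δ_M × Δ_N with a unique Nash equilibrium z* = (x*, y*), define c_x = min_{x ∈ Δ_M, x ≠ x*} max_{y: supp(y) ⊆ supp(y*)} (x − x*)ᵀGy / ‖x − x*‖₁ and c_y analogously. Then for C = min{c_x, c_y} and any z = (x,y) ∈ Δ_M × Δ_N: max_{z' : supp(z') ⊆ supp(z*)} F(z)ᵀ(z − z') ≥ C·‖z* − z‖₁, where F(z) = (Gy, −Gᵀx). -/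
/-- `(xs, ys)` is a Nash equilibrium of the matrix game `G`. -/
def isNE {M N : ℕ} (G : Matrix (Fin M) (Fin N) ℝ) (xs : Fin M → ℝ) (ys : Fin N → ℝ) : Prop :=
  xs ∈ simplex M ∧ ys ∈ simplex N ∧
    ∀ x ∈ simplex M, ∀ y ∈ simplex N,
      payoff G xs y ≤ payoff G xs ys ∧ payoff G xs ys ≤ payoff G x ys

/-- `c_x = min_{x ≠ x*} max_{supp y ⊆ supp y*} (x - x*)ᵀ G y / ‖x - x*‖₁`. -/
noncomputable def cX {M N : ℕ} (G : Matrix (Fin M) (Fin N) ℝ)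
    (xs : Fin M → ℝ) (ys : Fin N → ℝ) : ℝ :=
  sInf ((fun x => sSup ((fun y =>
      (∑ i, (x i - xs i) * ∑ j, G i j * y j) / ∑ i, |x i - xs i|) ''
    {y ∈ simplex N | ∀ j, 0 < y j → 0 < ys j})) '' {x ∈ simplex M | x ≠ xs})

/-- `c_y = min_{y ≠ y*} max_{supp x ⊆ supp x*} xᵀ G (y* - y) / ‖y* - y‖₁`. -/
noncomputable def cY {M N : ℕ} (G : Matrix (Fin M) (Fin N) ℝ)
    (xs : Fin M → ℝ) (ys : Fin N → ℝ) : ℝ :=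
  sInf ((fun y => sSup ((fun x =>
      (∑ i, x i * ∑ j, G i j * (ys j - y j)) / ∑ j, |ys j - y j|) ''
    {x ∈ simplex M | ∀ i, 0 < x i → 0 < xs i})) '' {y ∈ simplex N | y ≠ ys})

lemma payoff_left {M N : ℕ} (G : Matrix (Fin M) (Fin N) ℝ) (x : Fin M → ℝ) (y : Fin N → ℝ) :
    payoff G x y = ∑ i, x i * ∑ j, G i j * y j := by
  unfold payoff
  refine Finset.sum_congr rfl fun i _ => ?_
  rw [Finset.mul_sum]
  exact Finset.sum_congr rfl fun j _ => by ring

lemma payoff_right {M N : ℕ} (G : Matrix (Fin M) (Fin N) ℝ) (x : Fin M → ℝ) (y : Fin N → ℝ) :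
    payoff G x y = ∑ j, y j * ∑ i, x i * G i j := by
  unfold payoff
  rw [Finset.sum_comm]
  refine Finset.sum_congr rfl fun j _ => ?_
  rw [Finset.mul_sum]
  exact Finset.sum_congr rfl fun i _ => by ring

lemma single_mem_simplex {d : ℕ} (j : Fin d) : (Pi.single j 1 : Fin d → ℝ) ∈ simplex d := by
  constructor
  · intro i
    by_cases h : i = j <;> simp [h, Pi.single_apply]
  · simp [Finset.sum_pi_single']

lemma csY {M N : ℕ} (G : Matrix (Fin M) (Fin N) ℝ) (xs : Fin M → ℝ) (ys : Fin N → ℝ)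
    (hNE : isNE G xs ys) (j : Fin N) (hj : 0 < ys j) :
    ∑ i, xs i * G i j = payoff G xs ys := by
  obtain ⟨hxs, hys, hopt⟩ := hNE
  set ρ := payoff G xs ys with hρ
  set g : Fin N → ℝ := fun j => ∑ i, xs i * G i j with hg
  have hle : ∀ j', g j' ≤ ρ := by
    intro j'
    have := (hopt xs hxs _ (single_mem_simplex j')).1
    rwa [payoff_right, Finset.sum_eq_single j' (by intro b _ hb; simp [Pi.single_apply, hb])
      (by intro h; exact absurd (Finset.mem_univ j') h), Pi.single_eq_same, one_mul] at this
  have hsum : ∑ j', ys j' * g j' = ρ := (payoff_right G xs ys).symm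
  have hzero : ∑ j', ys j' * (ρ - g j') = 0 := by
    rw [Finset.sum_congr rfl (fun j' _ => mul_sub (ys j') ρ (g j')), Finset.sum_sub_distrib,
      hsum, ← Finset.sum_mul, hys.2, one_mul, sub_self]
  have hterm := (Finset.sum_eq_zero_iff_of_nonneg (fun j' _ =>
    mul_nonneg (hys.1 j') (sub_nonneg.2 (hle j')))).1 hzero j (Finset.mem_univ j)
  rcases mul_eq_zero.1 hterm with h | h
  · exact absurd h hj.ne'
  · linarith [sub_eq_zero.1 h]

lemma csX {M N : ℕ} (G : Matrix (Fin M) (Fin N) ℝ) (xs : Fin M → ℝ) (ys : Fin N → ℝ)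
    (hNE : isNE G xs ys) (i : Fin M) (hi : 0 < xs i) :
    ∑ j, G i j * ys j = payoff G xs ys := by
  obtain ⟨hxs, hys, hopt⟩ := hNE
  set ρ := payoff G xs ys with hρ
  set g : Fin M → ℝ := fun i => ∑ j, G i j * ys j with hg
  have hle : ∀ i', ρ ≤ g i' := by
    intro i'
    have := (hopt _ (single_mem_simplex i') ys hys).2
    rwa [payoff_left, Finset.sum_eq_single i' (by intro b _ hb; simp [Pi.single_apply, hb])
      (by intro h; exact absurd (Finset.mem_univ i') h), Pi.single_eq_same, one_mul] at this
  have hsum : ∑ i', xs i' * g i' = ρ := (payoff_left G xs ys).symm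
  have hzero : ∑ i', xs i' * (g i' - ρ) = 0 := by
    rw [Finset.sum_congr rfl (fun i' _ => mul_sub (xs i') (g i') ρ), Finset.sum_sub_distrib,
      hsum, ← Finset.sum_mul, hxs.2, one_mul, sub_self]
  have hterm := (Finset.sum_eq_zero_iff_of_nonneg (fun i' _ =>
    mul_nonneg (hxs.1 i') (sub_nonneg.2 (hle i')))).1 hzero i (Finset.mem_univ i)
  rcases mul_eq_zero.1 hterm with h | h
  · exact absurd h hi.ne'
  · linarith [sub_eq_zero.1 h]

lemma supported_right {M N : ℕ} (G : Matrix (Fin M) (Fin N) ℝ) (xs : Fin M → ℝ)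
    (ys : Fin N → ℝ) (hNE : isNE G xs ys) {y' : Fin N → ℝ} (hy' : y' ∈ simplex N)
    (hsupp : ∀ j, 0 < y' j → 0 < ys j) :
    ∑ i, xs i * ∑ j, G i j * y' j = payoff G xs ys := by
  rw [← payoff_left, payoff_right]
  have : ∀ j ∈ Finset.univ, y' j * (∑ i, xs i * G i j) = y' j * payoff G xs ys := by
    intro j _
    rcases (hy'.1 j).lt_or_eq with h | h
    · rw [csY G xs ys hNE j (hsupp j h)]
    · rw [← h, zero_mul, zero_mul]
  rw [Finset.sum_congr rfl this, ← Finset.sum_mul, hy'.2, one_mul]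

lemma supported_left {M N : ℕ} (G : Matrix (Fin M) (Fin N) ℝ) (xs : Fin M → ℝ)
    (ys : Fin N → ℝ) (hNE : isNE G xs ys) {x' : Fin M → ℝ} (hx' : x' ∈ simplex M)
    (hsupp : ∀ i, 0 < x' i → 0 < xs i) :
    ∑ i, x' i * ∑ j, G i j * ys j = payoff G xs ys := by
  have : ∀ i ∈ Finset.univ, x' i * (∑ j, G i j * ys j) = x' i * payoff G xs ys := by
    intro i _
    rcases (hx'.1 i).lt_or_eq with h | h
    · rw [csX G xs ys hNE i (hsupp i h)]
    · rw [← h, zero_mul, zero_mul]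
  rw [Finset.sum_congr rfl this, ← Finset.sum_mul, hx'.2, one_mul]

lemma inner_abs_le {M N : ℕ} (G : Matrix (Fin M) (Fin N) ℝ)
    (hG : ∀ i j, G i j ∈ Set.Icc (-1 : ℝ) 1) (i : Fin M) (v : Fin N → ℝ) :
    |∑ j, G i j * v j| ≤ ∑ j, |v j| := by
  refine (Finset.abs_sum_le_sum_abs _ _).trans (Finset.sum_le_sum fun j _ => ?_)
  rw [abs_mul]
  have h1 : |G i j| ≤ 1 := abs_le.2 ⟨(hG i j).1, (hG i j).2⟩
  nlinarith [abs_nonneg (v j), abs_nonneg (G i j)]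

lemma num1_abs_le {M N : ℕ} (G : Matrix (Fin M) (Fin N) ℝ)
    (hG : ∀ i j, G i j ∈ Set.Icc (-1 : ℝ) 1) (c : Fin M → ℝ) {y' : Fin N → ℝ}
    (hy' : y' ∈ simplex N) :
    |∑ i, c i * ∑ j, G i j * y' j| ≤ ∑ i, |c i| := by
  refine (Finset.abs_sum_le_sum_abs _ _).trans (Finset.sum_le_sum fun i _ => ?_)
  rw [abs_mul]
  have h2 : |∑ j, G i j * y' j| ≤ 1 := by
    refine (inner_abs_le G hG i y').trans ?_
    rw [Finset.sum_congr rfl fun j _ => abs_of_nonneg (hy'.1 j), hy'.2]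
  nlinarith [abs_nonneg (c i), abs_nonneg (∑ j, G i j * y' j)]

lemma num2_abs_le {M N : ℕ} (G : Matrix (Fin M) (Fin N) ℝ)
    (hG : ∀ i j, G i j ∈ Set.Icc (-1 : ℝ) 1) {x' : Fin M → ℝ} (hx' : x' ∈ simplex M)
    (v : Fin N → ℝ) :
    |∑ i, x' i * ∑ j, G i j * v j| ≤ ∑ j, |v j| := by
  have : ∀ i ∈ Finset.univ, |x' i * ∑ j, G i j * v j| ≤ x' i * ∑ j, |v j| := by
    intro i _
    rw [abs_mul, abs_of_nonneg (hx'.1 i)]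
    exact mul_le_mul_of_nonneg_left (inner_abs_le G hG i v) (hx'.1 i)
  refine (Finset.abs_sum_le_sum_abs _ _).trans ((Finset.sum_le_sum this).trans ?_)
  rw [← Finset.sum_mul, hx'.2, one_mul]

lemma sum_abs_pos_of_ne {d : ℕ} {u v : Fin d → ℝ} (h : u ≠ v) : 0 < ∑ i, |u i - v i| := by
  rcases (Finset.sum_nonneg fun i _ => abs_nonneg (u i - v i)).lt_or_eq with h1 | h1
  · exact h1
  · exfalso
    apply h
    funext i
    have h2 := (Finset.sum_eq_zero_iff_of_nonneg fun i _ => abs_nonneg (u i - v i)).1 h1.symm i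
      (Finset.mem_univ i)
    have := abs_eq_zero.1 h2
    linarith

lemma swap_sum {M N : ℕ} (G : Matrix (Fin M) (Fin N) ℝ) (v : Fin M → ℝ) (w : Fin N → ℝ) :
    ∑ j, w j * ∑ i, G i j * v i = ∑ i, v i * ∑ j, G i j * w j := by
  simp_rw [Finset.mul_sum]
  rw [Finset.sum_comm]
  exact Finset.sum_congr rfl fun i _ => Finset.sum_congr rfl fun j _ => by ring

/-- For a matrix game with a unique Nash equilibrium `z* = (x*, y*)` and
`C = min{c_x, c_y}`, for any `z = (x, y)` on the product of simplices:
`max_{z' : supp z' ⊆ supp z*} F(z)ᵀ(z - z') ≥ C ‖z* - z‖₁`,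
where `F(z) = (Gy, -Gᵀx)`. -/
theorem stmt15 (M N : ℕ) (G : Matrix (Fin M) (Fin N) ℝ)
    (hG : ∀ i j, G i j ∈ Set.Icc (-1 : ℝ) 1)
    (xs : Fin M → ℝ) (ys : Fin N → ℝ)
    (hNE : isNE G xs ys)
    (huniq : ∀ xs' ys', isNE G xs' ys' → xs' = xs ∧ ys' = ys) :
    ∀ x ∈ simplex M, ∀ y ∈ simplex N,
      min (cX G xs ys) (cY G xs ys) * ((∑ i, |xs i - x i|) + ∑ j, |ys j - y j|) ≤
        sSup ((fun z' : (Fin M → ℝ) × (Fin N → ℝ) =>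
            (∑ i, (x i - z'.1 i) * ∑ j, G i j * y j)
              + (∑ j, (z'.2 j - y j) * ∑ i, G i j * x i)) ''
          ({x' ∈ simplex M | ∀ i, 0 < x' i → 0 < xs i} ×ˢ
            {y' ∈ simplex N | ∀ j, 0 < y' j → 0 < ys j})) := by
  intro x hx y hy
  have hxs := hNE.1
  have hys := hNE.2.1
  set ρ := payoff G xs ys with hρdef
  set SX : Set (Fin M → ℝ) := {x' ∈ simplex M | ∀ i, 0 < x' i → 0 < xs i} with hSX
  set SY : Set (Fin N → ℝ) := {y' ∈ simplex N | ∀ j, 0 < y' j → 0 < ys j} with hSY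
  have hxsSX : xs ∈ SX := ⟨hxs, fun _ h => h⟩
  have hysSY : ys ∈ SY := ⟨hys, fun _ h => h⟩
  set a : ℝ := ∑ i, |x i - xs i| with ha
  set b : ℝ := ∑ j, |ys j - y j| with hb
  have ha0 : 0 ≤ a := Finset.sum_nonneg fun i _ => abs_nonneg _
  have hb0 : 0 ≤ b := Finset.sum_nonneg fun j _ => abs_nonneg _
  set num1 : (Fin N → ℝ) → ℝ := fun y' => ∑ i, (x i - xs i) * ∑ j, G i j * y' j with hnum1
  set num2 : (Fin M → ℝ) → ℝ := fun x' => ∑ i, x' i * ∑ j, G i j * (ys j - y j) with hnum2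
  have hn1 : ∀ y' ∈ SY, |num1 y'| ≤ a := fun y' hy' => num1_abs_le G hG _ hy'.1
  have hn2 : ∀ x' ∈ SX, |num2 x'| ≤ b := fun x' hx' => num2_abs_le G hG hx'.1 _
  set S1 := sSup (num1 '' SY) with hS1
  set S2 := sSup (num2 '' SX) with hS2
  have hbdd1 : BddAbove (num1 '' SY) := by
    refine ⟨a, fun v hv => ?_⟩
    obtain ⟨y', hy', rfl⟩ := hv
    exact (le_abs_self _).trans (hn1 y' hy')
  have hbdd2 : BddAbove (num2 '' SX) := by
    refine ⟨b, fun v hv => ?_⟩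
    obtain ⟨x', hx', rfl⟩ := hv
    exact (le_abs_self _).trans (hn2 x' hx')
  have hne1 : (num1 '' SY).Nonempty := ⟨_, ⟨ys, hysSY, rfl⟩⟩
  have hne2 : (num2 '' SX).Nonempty := ⟨_, ⟨xs, hxsSX, rfl⟩⟩
  -- Step A : min (cX) (cY) * a ≤ S1
  have stepA : min (cX G xs ys) (cY G xs ys) * a ≤ S1 := by
    by_cases hxx : x = xs
    · have haz : a = 0 := by
        rw [ha, hxx]
        simp
      have : (0 : ℝ) ≤ S1 := by
        have hmem : num1 ys ∈ num1 '' SY := ⟨ys, hysSY, rfl⟩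
        have hval : num1 ys = 0 := by
          rw [hnum1]
          simp [hxx]
        have := le_csSup hbdd1 hmem
        linarith [hval ▸ this]
      rw [haz, mul_zero]
      exact this
    · have hapos : 0 < a := sum_abs_pos_of_ne hxx
      -- cX ≤ sSup of quotients at x
      have hlbX : ∀ t ∈ ((fun x => sSup ((fun y =>
          (∑ i, (x i - xs i) * ∑ j, G i j * y j) / ∑ i, |x i - xs i|) ''
          SY)) '' {x ∈ simplex M | x ≠ xs}), (-1 : ℝ) ≤ t := by
        rintro t ⟨x'', ⟨hx''s, hx''ne⟩, rfl⟩
        have hden : 0 < ∑ i, |x'' i - xs i| := sum_abs_pos_of_ne hx''ne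
        have hub : ∀ q ∈ (fun y => (∑ i, (x'' i - xs i) * ∑ j, G i j * y j) /
            ∑ i, |x'' i - xs i|) '' SY, q ≤ 1 := by
          rintro q ⟨y', hy', rfl⟩
          rw [div_le_one hden]
          exact (le_abs_self _).trans (num1_abs_le G hG _ hy'.1)
        have hmem0 : (∑ i, (x'' i - xs i) * ∑ j, G i j * ys j) / ∑ i, |x'' i - xs i| ∈
            (fun y => (∑ i, (x'' i - xs i) * ∑ j, G i j * y j) / ∑ i, |x'' i - xs i|) '' SY :=
          ⟨ys, hysSY, rfl⟩
        have hq0 : (-1 : ℝ) ≤ (∑ i, (x'' i - xs i) * ∑ j, G i j * ys j) /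
            ∑ i, |x'' i - xs i| := by
          rw [neg_le, ← neg_div, div_le_one hden]
          have := num1_abs_le G hG (fun i => x'' i - xs i) hys
          calc -(∑ i, (x'' i - xs i) * ∑ j, G i j * ys j)
              ≤ |∑ i, (x'' i - xs i) * ∑ j, G i j * ys j| := neg_le_abs _
            _ ≤ ∑ i, |x'' i - xs i| := this
        exact hq0.trans (le_csSup ⟨1, hub⟩ hmem0)
      have hcXle : cX G xs ys ≤ sSup ((fun y =>
          (∑ i, (x i - xs i) * ∑ j, G i j * y j) / a) '' SY) := by
        rw [cX]
        exact csInf_le ⟨-1, hlbX⟩ ⟨x, ⟨hx, hxx⟩, rfl⟩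
      have hsupQ : sSup ((fun y => (∑ i, (x i - xs i) * ∑ j, G i j * y j) / a) '' SY) ≤
          S1 / a := by
        refine csSup_le ⟨_, ⟨ys, hysSY, rfl⟩⟩ ?_
        rintro q ⟨y', hy', rfl⟩
        have : num1 y' ≤ S1 := le_csSup hbdd1 ⟨y', hy', rfl⟩
        exact (div_le_div_iff_of_pos_right hapos).2 this
      have hcXa : cX G xs ys * a ≤ S1 := by
        have := hcXle.trans hsupQ
        exact (le_div_iff₀ hapos).1 this
      calc min (cX G xs ys) (cY G xs ys) * a ≤ cX G xs ys * a :=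
            mul_le_mul_of_nonneg_right (min_le_left _ _) ha0
        _ ≤ S1 := hcXa
  -- Step B : min * b ≤ S2
  have stepB : min (cX G xs ys) (cY G xs ys) * b ≤ S2 := by
    by_cases hyy : y = ys
    · have hbz : b = 0 := by
        rw [hb, hyy]
        simp
      have : (0 : ℝ) ≤ S2 := by
        have hval : num2 xs = 0 := by
          rw [hnum2, hyy]
          simp
        have := le_csSup hbdd2 ⟨xs, hxsSX, rfl⟩
        linarith [hval ▸ this]
      rw [hbz, mul_zero]
      exact this
    · have hbne : ys ≠ y := fun h => hyy h.symm
      have hbpos : 0 < b := sum_abs_pos_of_ne hbne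
      have hlbY : ∀ t ∈ ((fun y => sSup ((fun x =>
          (∑ i, x i * ∑ j, G i j * (ys j - y j)) / ∑ j, |ys j - y j|) ''
          SX)) '' {y ∈ simplex N | y ≠ ys}), (-1 : ℝ) ≤ t := by
        rintro t ⟨y'', ⟨hy''s, hy''ne⟩, rfl⟩
        have hden : 0 < ∑ j, |ys j - y'' j| :=
          sum_abs_pos_of_ne (fun h => hy''ne h.symm)
        have hub : ∀ q ∈ (fun x => (∑ i, x i * ∑ j, G i j * (ys j - y'' j)) /
            ∑ j, |ys j - y'' j|) '' SX, q ≤ 1 := by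
          rintro q ⟨x', hx', rfl⟩
          rw [div_le_one hden]
          exact (le_abs_self _).trans (num2_abs_le G hG hx'.1 _)
        have hq0 : (-1 : ℝ) ≤ (∑ i, xs i * ∑ j, G i j * (ys j - y'' j)) /
            ∑ j, |ys j - y'' j| := by
          rw [neg_le, ← neg_div, div_le_one hden]
          exact (neg_le_abs _).trans (num2_abs_le G hG hxs _)
        exact hq0.trans (le_csSup ⟨1, hub⟩ ⟨xs, hxsSX, rfl⟩)
      have hcYle : cY G xs ys ≤ sSup ((fun x =>
          (∑ i, x i * ∑ j, G i j * (ys j - y j)) / b) '' SX) := by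
        rw [cY]
        exact csInf_le ⟨-1, hlbY⟩ ⟨y, ⟨hy, hyy⟩, rfl⟩
      have hsupQ : sSup ((fun x => (∑ i, x i * ∑ j, G i j * (ys j - y j)) / b) '' SX) ≤
          S2 / b := by
        refine csSup_le ⟨_, ⟨xs, hxsSX, rfl⟩⟩ ?_
        rintro q ⟨x', hx', rfl⟩
        exact (div_le_div_iff_of_pos_right hbpos).2 (le_csSup hbdd2 ⟨x', hx', rfl⟩)
      have hcYb : cY G xs ys * b ≤ S2 := (le_div_iff₀ hbpos).1 (hcYle.trans hsupQ)
      calc min (cX G xs ys) (cY G xs ys) * b ≤ cY G xs ys * b :=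
            mul_le_mul_of_nonneg_right (min_le_right _ _) hb0
        _ ≤ S2 := hcYb
  -- Step C : S1 + S2 ≤ RHS
  set F : (Fin M → ℝ) × (Fin N → ℝ) → ℝ := fun z' =>
      (∑ i, (x i - z'.1 i) * ∑ j, G i j * y j)
        + (∑ j, (z'.2 j - y j) * ∑ i, G i j * x i) with hF
  have hkey : ∀ x' ∈ SX, ∀ y' ∈ SY, F (x', y') = num1 y' + num2 x' := by
    intro x' hx' y' hy'
    have hP1 : ∑ j, y' j * ∑ i, G i j * x i = ∑ i, x i * ∑ j, G i j * y' j :=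
      swap_sum G x y'
    have hP3 : ∑ j, y j * ∑ i, G i j * x i = ∑ i, x i * ∑ j, G i j * y j :=
      swap_sum G x y
    have hρ1 : ∑ i, xs i * ∑ j, G i j * y' j = ρ :=
      supported_right G xs ys hNE hy'.1 hy'.2
    have hρ2 : ∑ i, x' i * ∑ j, G i j * ys j = ρ :=
      supported_left G xs ys hNE hx'.1 hx'.2
    have e1 : ∑ i, (x i - x' i) * ∑ j, G i j * y j =
        (∑ i, x i * ∑ j, G i j * y j) - ∑ i, x' i * ∑ j, G i j * y j := by
      rw [← Finset.sum_sub_distrib]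
      exact Finset.sum_congr rfl fun i _ => by ring
    have e2 : ∑ j, (y' j - y j) * ∑ i, G i j * x i =
        (∑ j, y' j * ∑ i, G i j * x i) - ∑ j, y j * ∑ i, G i j * x i := by
      rw [← Finset.sum_sub_distrib]
      exact Finset.sum_congr rfl fun j _ => by ring
    have e3 : num1 y' = (∑ i, x i * ∑ j, G i j * y' j) - ∑ i, xs i * ∑ j, G i j * y' j := by
      rw [hnum1, ← Finset.sum_sub_distrib]
      exact Finset.sum_congr rfl fun i _ => by ring
    have e4 : num2 x' = (∑ i, x' i * ∑ j, G i j * ys j) - ∑ i, x' i * ∑ j, G i j * y j := by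
      rw [hnum2, ← Finset.sum_sub_distrib]
      refine Finset.sum_congr rfl fun i _ => ?_
      rw [← mul_sub, ← Finset.sum_sub_distrib]
      congr 1
      exact Finset.sum_congr rfl fun j _ => by ring
    simp only [hF]
    rw [e1, e2, hP1, hP3, e3, e4, hρ1, hρ2]
    ring
  have hRbdd : BddAbove (F '' (SX ×ˢ SY)) := by
    refine ⟨a + b, fun v hv => ?_⟩
    obtain ⟨⟨x', y'⟩, hz', rfl⟩ := hv
    rw [hkey x' hz'.1 y' hz'.2]
    have := hn1 y' hz'.2
    have := hn2 x' hz'.1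
    have h1 := abs_le.1 (hn1 y' hz'.2)
    have h2 := abs_le.1 (hn2 x' hz'.1)
    linarith [h1.2, h2.2]
  have stepC : S1 + S2 ≤ sSup (F '' (SX ×ˢ SY)) := by
    have h1 : S1 ≤ sSup (F '' (SX ×ˢ SY)) - S2 := by
      refine csSup_le hne1 ?_
      rintro v ⟨y', hy', rfl⟩
      rw [le_sub_iff_add_le]
      have h2 : S2 ≤ sSup (F '' (SX ×ˢ SY)) - num1 y' := by
        refine csSup_le hne2 ?_
        rintro w ⟨x', hx', rfl⟩
        rw [le_sub_iff_add_le]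
        have hmem : F (x', y') ∈ F '' (SX ×ˢ SY) := ⟨(x', y'), ⟨hx', hy'⟩, rfl⟩
        have := le_csSup hRbdd hmem
        rw [hkey x' hx' y' hy'] at this
        linarith
      linarith
    linarith
  -- assemble
  have habs : ∑ i, |xs i - x i| = a := by
    rw [ha]
    exact Finset.sum_congr rfl fun i _ => abs_sub_comm _ _
  rw [habs]
  have : min (cX G xs ys) (cY G xs ys) * (a + b) =
      min (cX G xs ys) (cY G xs ys) * a + min (cX G xs ys) (cY G xs ys) * b := by ring
  rw [this]
  exact le_trans (add_le_add stepA stepB) stepC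
end

section
/- Consider the bilinear game f(x,y) = x₂y₁ − x₁y₂ on X = Y = {(a,b): 0 ≤ a ≤ 1/2, 0 ≤ b ≤ 1/4, b ≥ a²}. Then the unique Nash equilibrium is x* = (0,0), y* = (0,0): for any x ≠ 0 there exists y' ∈ Y with f(x, y') > 0, while max_{y' ∈ Y} f(0, y') = 0. -/
/-- The curved feasible set `{(a,b) : 0 ≤ a ≤ 1/2, 0 ≤ b ≤ 1/4, a² ≤ b}`. -/
def Scurv : Set (ℝ × ℝ) :=
  {p | 0 ≤ p.1 ∧ p.1 ≤ 1 / 2 ∧ 0 ≤ p.2 ∧ p.2 ≤ 1 / 4 ∧ p.1 ^ 2 ≤ p.2}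

/-- The bilinear objective `f(x,y) = x₂ y₁ - x₁ y₂`. -/
def fcurv (x y : ℝ × ℝ) : ℝ := x.2 * y.1 - x.1 * y.2

/-- `(xs, ys)` is a Nash equilibrium (saddle point) of `fcurv` on `Scurv × Scurv`. -/
def isNEcurv (xs ys : ℝ × ℝ) : Prop :=
  xs ∈ Scurv ∧ ys ∈ Scurv ∧
    ∀ x ∈ Scurv, ∀ y ∈ Scurv, fcurv xs y ≤ fcurv xs ys ∧ fcurv xs ys ≤ fcurv x ys

lemma hS0curv : ((0:ℝ), (0:ℝ)) ∈ Scurv := by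
  refine ⟨le_refl _, by norm_num, le_refl _, by norm_num, by norm_num⟩

lemma keycurv : ∀ x ∈ Scurv, x ≠ (0, 0) → ∃ y' ∈ Scurv, 0 < fcurv x y' := by
  rintro ⟨a, b⟩ ⟨ha0, ha1, hb0, hb1, hab⟩ hne
  have hb : 0 < b := by
    rcases lt_or_eq_of_le hb0 with h | h
    · exact h
    · exfalso
      apply hne
      have hb' : b = 0 := h.symm
      have ha : a = 0 := by nlinarith
      simp [ha, hb', Prod.ext_iff]
  set t := min (1/2 : ℝ) b with ht
  have ht0 : 0 < t := lt_min (by norm_num) hb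
  have ht2 : t ≤ 1/2 := min_le_left _ _
  have htb : t ≤ b := min_le_right _ _
  refine ⟨(t, t^2), ⟨ht0.le, ht2, by positivity, by nlinarith, le_refl _⟩, ?_⟩
  show 0 < b * t - a * t^2
  nlinarith [mul_pos hb ht0, mul_pos ht0 ht0]

/-- For the bilinear game `f(x,y) = x₂y₁ - x₁y₂` on the curved region,
the unique Nash equilibrium is `x* = (0,0)`, `y* = (0,0)`: for any `x ≠ 0`
there is `y' ∈ S` with `f(x, y') > 0`, while `max_{y'} f(0, y') = 0`. -/
theorem stmt17 :
    isNEcurv (0, 0) (0, 0) ∧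
    (∀ xs ys : ℝ × ℝ, isNEcurv xs ys → xs = (0, 0) ∧ ys = (0, 0)) ∧
    (∀ x ∈ Scurv, x ≠ (0, 0) → ∃ y' ∈ Scurv, 0 < fcurv x y') ∧
    (∀ y' ∈ Scurv, fcurv (0, 0) y' ≤ 0) ∧
    (∃ y' ∈ Scurv, fcurv (0, 0) y' = 0) := by
  refine ⟨⟨hS0curv, hS0curv, ?_⟩, ?_, keycurv, ?_, ⟨(0,0), hS0curv, by simp [fcurv]⟩⟩
  · intro x hx y hy
    simp [fcurv]
  · rintro xs ys ⟨hxs, hys, hsad⟩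
    have hxs0 : xs = (0, 0) := by
      by_contra hne
      obtain ⟨y', hy', hpos⟩ := keycurv xs hxs hne
      have h1 := (hsad (0,0) hS0curv y' hy').1
      have h2 := (hsad (0,0) hS0curv y' hy').2
      have : fcurv (0,0) ys = 0 := by simp [fcurv]
      linarith
    subst hxs0
    obtain ⟨c, d⟩ := ys
    obtain ⟨hc0, hc1, hd0, hd1, hcd⟩ := hys
    have hzero : fcurv (0,0) ((c,d)) = 0 := by simp [fcurv]
    have hge : ∀ x ∈ Scurv, (0:ℝ) ≤ fcurv x (c, d) := by
      intro x hx
      have := (hsad x hx (c,d) ⟨hc0, hc1, hd0, hd1, hcd⟩).2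
      linarith [hzero ▸ this]
    have hd : d ≤ 0 := by
      by_contra hd
      push_neg at hd
      set t := min (1/2 : ℝ) (d / (2*c + 1)) with htdef
      have ht0 : 0 < t := lt_min (by norm_num) (by positivity)
      have ht2 : t ≤ 1/2 := min_le_left _ _
      have htd : t ≤ d / (2*c + 1) := min_le_right _ _
      have htd' : t * (2*c + 1) ≤ d := by
        rw [div_eq_mul_inv] at htd
        have h2c : (0:ℝ) < 2*c + 1 := by linarith
        calc t * (2*c+1) ≤ d * (2*c+1)⁻¹ * (2*c+1) := by nlinarith
          _ = d := by field_simp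
      have hmem : ((t, t^2) : ℝ × ℝ) ∈ Scurv :=
        ⟨ht0.le, ht2, by positivity, by nlinarith, le_refl _⟩
      have := hge (t, t^2) hmem
      have h' : (0:ℝ) ≤ t^2 * c - t * d := this
      nlinarith
    have hd0' : d = 0 := le_antisymm hd hd0
    have hc : c = 0 := by nlinarith
    refine ⟨rfl, by simp [hc, hd0', Prod.ext_iff]⟩
  · intro y' hy'
    simp [fcurv]
end
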